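/- Let $|\cdot|$ be the $p$-adic absolute value on $\mathbb{Q}_p$ normalized so that $1/2 < |p| < 1$, and let $V = \mathbb{Q}_p^5$ with the $\ell^1$-norm. Set $v = (0, p, p, -p, 0)$, $x_0 = (1, p, p, 0, 0)$, $x_1 = (1, 0, 0, p, p)$. Then: (a) $x_0$ is orthogonal to $x_1$ and $x_1$ is orthogonal to $x_0$; (b) $v$ is orthogonal to $x_1$; (c) $v - x_0$ is an $x_0$-orthogonal component of $v$ (i.e., $x_0$ is a nearest point to $v$ on the line $\mathbb{Q}_p x_0$); but (d) $v - x_0 = (-1, 0, 0, -p, 0)$ is not orthogonal to $x_1$, since $\|(v - x_0) + x_1\| = |p| < 1 + |p| = \|v - x_0\|$. -/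
import Mathlib


theorem stmt_8 (p : ℕ) [Fact p.Prime] (ε : ℝ) (hε : 1/2 < ε) (hε1 : ε < 1)
    (av : ℚ_[p] → ℝ) (hav_nonneg : ∀ c, 0 ≤ av c)
    (hav_ultra : ∀ c0 c1 : ℚ_[p], av (c0 - c1) ≤ max (av c0) (av c1))
    (hav_mul : ∀ c0 c1 : ℚ_[p], av (c0 * c1) = av c0 * av c1)
    (hav_def : ∀ c : ℚ_[p], av c = 0 ↔ c = 0)
    (hav_one : av 1 = 1)
    (hav_p : av (p : ℚ_[p]) = ε)
    (N : (Fin 5 → ℚ_[p]) → ℝ) (hN : ∀ x, N x = ∑ d, av (x d))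
    (v x0 x1 : Fin 5 → ℚ_[p])
    (hv : v = ![0, (p : ℚ_[p]), (p : ℚ_[p]), -(p : ℚ_[p]), 0])
    (hx0 : x0 = ![1, (p : ℚ_[p]), (p : ℚ_[p]), 0, 0])
    (hx1 : x1 = ![1, 0, 0, (p : ℚ_[p]), (p : ℚ_[p])]) :
    -- (a) (x0, x1) is an orthogonal system
    ((∀ c : ℚ_[p], N x0 ≤ N (x0 - c • x1)) ∧ (∀ c : ℚ_[p], N x1 ≤ N (x1 - c • x0))) ∧
    -- (b) v is orthogonal to x1
    (∀ c : ℚ_[p], N v ≤ N (v - c • x1)) ∧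
    -- (c) v - x0 is an x0-orthogonal component of v
    (∀ c : ℚ_[p], N (v - x0) ≤ N (v - c • x0)) ∧
    -- (d) v - x0 is not orthogonal to x1
    ¬ (∀ c : ℚ_[p], N (v - x0) ≤ N ((v - x0) - c • x1)) ∧
    N ((v - x0) + x1) = ε ∧ N (v - x0) = 1 + ε := by

  have h0 : av 0 = 0 := (hav_def 0).mpr rfl
  have hεpos : (0:ℝ) < ε := by linarith
  have hneg : ∀ c : ℚ_[p], av (-c) = av c := by
    intro c
    have h1 : av (-c) ≤ av c := by
      have := hav_ultra 0 c
      simpa [h0, hav_nonneg c] using this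
    have h2 : av c ≤ av (-c) := by
      have := hav_ultra 0 (-c)
      simpa [h0, hav_nonneg (-c)] using this
    linarith
  have hkey : ∀ c : ℚ_[p], av c < 1 → 1 ≤ av (1 - c) := by
    intro c hc
    have h := hav_ultra 1 c
    simp only [hav_one] at h
    rcases max_cases (av (1 - c)) (av c) with ⟨he, _⟩ | ⟨he, _⟩
    · -- need other direction: 1 = av((1-c) - (-c)) ≤ max (av (1-c)) (av (-c))
      have h2 := hav_ultra (1 - c) (-c)
      rw [hneg] at h2
      have : ((1:ℚ_[p]) - c) - (-c) = 1 := by ring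
      rw [this, hav_one] at h2
      rcases le_max_iff.mp h2 with h3 | h3
      · exact h3
      · linarith
    · have h2 := hav_ultra (1 - c) (-c)
      rw [hneg] at h2
      have : ((1:ℚ_[p]) - c) - (-c) = 1 := by ring
      rw [this, hav_one] at h2
      rcases le_max_iff.mp h2 with h3 | h3
      · exact h3
      · linarith
  have hmulp : ∀ c : ℚ_[p], av ((p:ℚ_[p]) * c) = ε * av c := by
    intro c; rw [hav_mul, hav_p]
  have hnegone : av (-1) = 1 := by
    simpa [hav_one] using hneg 1
  refine ⟨⟨?_, ?_⟩, ?_, ?_, ?_, ?_, ?_⟩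
  · intro c
    rw [hN, hN]
    simp only [hx0, hx1, Pi.sub_apply, Pi.smul_apply, smul_eq_mul, Fin.sum_univ_five,
      Matrix.cons_val_zero, Matrix.cons_val_one, Matrix.head_cons, Matrix.cons_val_two,
      Matrix.tail_cons, Matrix.cons_val_three, Matrix.cons_val_four]
    have e0 : ((1:ℚ_[p]) - c * 1) = 1 - c := by ring
    have e1 : ((p:ℚ_[p]) - c * 0) = (p:ℚ_[p]) := by ring
    have e3 : ((0:ℚ_[p]) - c * (p:ℚ_[p])) = (p:ℚ_[p]) * (-c) := by ring
    rw [e0, e1, e3, hmulp, hneg, hav_p, h0]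
    rcases lt_or_ge (av c) 1 with hc | hc
    · have := hkey c hc
      have := hav_nonneg c
      nlinarith
    · have := hav_nonneg (1 - c)
      nlinarith
  · intro c
    rw [hN, hN]
    simp only [hx0, hx1, Pi.sub_apply, Pi.smul_apply, smul_eq_mul, Fin.sum_univ_five,
      Matrix.cons_val_zero, Matrix.cons_val_one, Matrix.head_cons, Matrix.cons_val_two,
      Matrix.tail_cons, Matrix.cons_val_three, Matrix.cons_val_four]
    have e0 : ((1:ℚ_[p]) - c * 1) = 1 - c := by ring
    have e1 : ((0:ℚ_[p]) - c * (p:ℚ_[p])) = (p:ℚ_[p]) * (-c) := by ring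
    have e3 : ((p:ℚ_[p]) - c * 0) = (p:ℚ_[p]) := by ring
    rw [e0, e1, e3, hmulp, hneg, hav_p, h0]
    rcases lt_or_ge (av c) 1 with hc | hc
    · have := hkey c hc
      have := hav_nonneg c
      nlinarith
    · have := hav_nonneg (1 - c)
      nlinarith
  · intro c
    rw [hN, hN]
    simp only [hv, hx1, Pi.sub_apply, Pi.smul_apply, smul_eq_mul, Fin.sum_univ_five,
      Matrix.cons_val_zero, Matrix.cons_val_one, Matrix.head_cons, Matrix.cons_val_two,
      Matrix.tail_cons, Matrix.cons_val_three, Matrix.cons_val_four]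
    have e0 : ((0:ℚ_[p]) - c * 1) = -c := by ring
    have e1 : ((p:ℚ_[p]) - c * 0) = (p:ℚ_[p]) := by ring
    have e3 : (-(p:ℚ_[p]) - c * (p:ℚ_[p])) = (p:ℚ_[p]) * (-(1 - (-c))) := by ring
    have e4 : ((0:ℚ_[p]) - c * (p:ℚ_[p])) = (p:ℚ_[p]) * (-c) := by ring
    rw [e0, e1, e3, e4, hmulp, hmulp]
    simp only [hneg, h0, hav_p]
    rcases lt_or_ge (av c) 1 with hc | hc
    · have hk := hkey (-c) (by rwa [hneg])
      have := hav_nonneg c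
      nlinarith
    · nlinarith [hav_nonneg (1 - -c), hav_nonneg c]
  · intro c
    rw [hN, hN]
    simp only [hv, hx0, Pi.sub_apply, Pi.smul_apply, smul_eq_mul, Fin.sum_univ_five,
      Matrix.cons_val_zero, Matrix.cons_val_one, Matrix.head_cons, Matrix.cons_val_two,
      Matrix.tail_cons, Matrix.cons_val_three, Matrix.cons_val_four]
    have e0 : ((0:ℚ_[p]) - c * 1) = -c := by ring
    have e0' : ((0:ℚ_[p]) - 1) = -1 := by ring
    have e1 : ((p:ℚ_[p]) - c * (p:ℚ_[p])) = (p:ℚ_[p]) * (1 - c) := by ring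
    have e1' : ((p:ℚ_[p]) - (p:ℚ_[p])) = 0 := by ring
    have e3 : (-(p:ℚ_[p]) - c * 0) = (p:ℚ_[p]) * (-1) := by ring
    have e3' : (-(p:ℚ_[p]) - 0) = (p:ℚ_[p]) * (-1) := by ring
    have e4 : ((0:ℚ_[p]) - c * 0) = 0 := by ring
    have e4' : ((0:ℚ_[p]) - 0) = 0 := by ring
    rw [e0, e0', e1, e1', e3, e3', e4, e4', hmulp, hmulp]
    simp only [hneg, hav_one, h0]
    rcases lt_or_ge (av c) 1 with hc | hc
    · have := hkey c hc
      have := hav_nonneg c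
      nlinarith
    · have := hav_nonneg (1 - c)
      nlinarith
  · intro hall
    have h := hall (-1)
    rw [hN, hN] at h
    simp only [hv, hx0, hx1, Pi.sub_apply, Pi.smul_apply, smul_eq_mul, Fin.sum_univ_five,
      Matrix.cons_val_zero, Matrix.cons_val_one, Matrix.head_cons, Matrix.cons_val_two,
      Matrix.tail_cons, Matrix.cons_val_three, Matrix.cons_val_four] at h
    have e0 : ((0:ℚ_[p]) - 1 - (-1) * 1) = 0 := by ring
    have e0' : ((0:ℚ_[p]) - 1) = -1 := by ring
    have e1 : ((p:ℚ_[p]) - (p:ℚ_[p]) - (-1) * 0) = 0 := by ring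
    have e1' : ((p:ℚ_[p]) - (p:ℚ_[p])) = 0 := by ring
    have e3 : (-(p:ℚ_[p]) - 0 - (-1) * (p:ℚ_[p])) = 0 := by ring
    have e3' : (-(p:ℚ_[p]) - 0) = (p:ℚ_[p]) * (-1) := by ring
    have e4 : ((0:ℚ_[p]) - 0 - (-1) * (p:ℚ_[p])) = (p:ℚ_[p]) := by ring
    have e4' : ((0:ℚ_[p]) - 0) = 0 := by ring
    rw [e0, e0', e1, e1', e3, e3', e4, e4', hmulp, hav_p] at h
    simp only [hneg, hav_one, h0] at h
    linarith
  · rw [hN]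
    simp only [hv, hx0, hx1, Pi.sub_apply, Pi.add_apply, Fin.sum_univ_five,
      Matrix.cons_val_zero, Matrix.cons_val_one, Matrix.head_cons, Matrix.cons_val_two,
      Matrix.tail_cons, Matrix.cons_val_three, Matrix.cons_val_four]
    have e0 : ((0:ℚ_[p]) - 1 + 1) = 0 := by ring
    have e1 : ((p:ℚ_[p]) - (p:ℚ_[p]) + 0) = 0 := by ring
    have e3 : (-(p:ℚ_[p]) - 0 + (p:ℚ_[p])) = 0 := by ring
    have e4 : ((0:ℚ_[p]) - 0 + (p:ℚ_[p])) = (p:ℚ_[p]) := by ring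
    rw [e0, e1, e3, e4, h0, hav_p]
    ring
  · rw [hN]
    simp only [hv, hx0, Pi.sub_apply, Fin.sum_univ_five,
      Matrix.cons_val_zero, Matrix.cons_val_one, Matrix.head_cons, Matrix.cons_val_two,
      Matrix.tail_cons, Matrix.cons_val_three, Matrix.cons_val_four]
    have e0 : ((0:ℚ_[p]) - 1) = -1 := by ring
    have e1 : ((p:ℚ_[p]) - (p:ℚ_[p])) = 0 := by ring
    have e3 : (-(p:ℚ_[p]) - 0) = (p:ℚ_[p]) * (-1) := by ring
    have e4 : ((0:ℚ_[p]) - 0) = 0 := by ring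
    rw [e0, e1, e3, e4, hmulp]
    simp only [hneg, hav_one, h0]
    ring
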